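/- Let n ≥ 2 be an even integer. Then there exists D ∈ ℕ such that for every odd integer d ≥ D the following holds: setting I = ⟨x_0^d, …, x_{n−1}^d, y^d⟩ in R, m_1 = x_0^{d−1}⋯x_{n−3}^{d−1}x_{n−2}^{n}y^{d−1} (for n = 2, m_1 = x_0^{2}y^{d−1}), and m_2 = x_0^{d−1}⋯x_{n−1}^{d−1}y^{n/2}, the number of monomials of weighted degree d dividing m_2 is at most the number of monomials u of weighted degree d such that u is none of x_0^d, …, x_{n−1}^d and u·m_1 ∈ I. -/

import Mathlib

/-!
Send a degree-`d` divisor `u` of `m₂` to itself when `u m₁ ∈ I`; it is not a pure power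
`x_j^d` since its `x`-exponents are below `d`. Otherwise every exponent of `u m₁` is below `d`,
which forces `u = x_{n-2}^a x_{n-1}^{d-a}` with `1 ≤ a < d - n`; send it to
`x_{n-2}^{a-1} x_{n-1}^{d-a-n-1} y^{n/2+1}`, which has degree `d` because `n` is even and lies in
`I : m₁` because of its `y`-exponent. That `y`-exponent exceeds `n/2`, so the new monomials do not
divide `m₂` and the map is injective. The bound holds for every `d ≥ 1`.
-/

open MvPolynomial

/-- The weighted degree of an exponent vector on the variables of
`R = k[x_0, …, x_{n-1}, y]`, where each `x_j` has degree 1 and `y` has degree 2. -/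
def degw (n : ℕ) (σ : (Fin n ⊕ Unit) →₀ ℕ) : ℕ :=
  (∑ j : Fin n, σ (Sum.inl j)) + 2 * σ (Sum.inr ())

open Finsupp (single)

theorem Set.injOn_piecewise_id {α : Type*} {s t : Set α} [DecidablePred (· ∈ t)] {f : α → α}
    (hf : Set.InjOn f (s ∩ t)) (hfs : Set.MapsTo f (s ∩ t) sᶜ) :
    Set.InjOn (t.piecewise f id) s := by
  intro a ha b hb hab
  by_cases hat : a ∈ t <;> by_cases hbt : b ∈ t <;>
    simp only [Set.piecewise_eq_of_mem, Set.piecewise_eq_of_notMem, hat, hbt, id,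
      not_false_eq_true] at hab
  · exact hf ⟨ha, hat⟩ ⟨hb, hbt⟩ hab
  · exact absurd (hab ▸ hb) (hfs ⟨ha, hat⟩)
  · exact absurd (hab ▸ ha) (hfs ⟨hb, hbt⟩)
  · exact hab

namespace MvPolynomial

variable {ι R : Type*} [CommSemiring R]

theorem monomial_mem_of_X_pow_mem {I : Ideal (MvPolynomial ι R)} {s : ι →₀ ℕ} {v : ι} {d : ℕ}
    (hI : X v ^ d ∈ I) (hd : d ≤ s v) (r : R) : monomial s r ∈ I := by
  have hs : single v d + (s - single v d) = s :=
    add_tsub_cancel_of_le (Finsupp.single_le_iff.mpr hd)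
  rw [← hs, monomial_single_add]
  exact I.mul_mem_right _ hI

theorem monomial_one_eq_X_pow_iff [Nontrivial R] {s : ι →₀ ℕ} {v : ι} {d : ℕ} :
    monomial s (1 : R) = X v ^ d ↔ s = single v d := by
  rw [X_pow_eq_monomial, monomial_left_inj one_ne_zero]

end MvPolynomial

section

variable {n : ℕ}

noncomputable def expVec (e : Fin n → ℕ) (b : ℕ) : (Fin n ⊕ Unit) →₀ ℕ :=
  Finsupp.equivFunOnFinite.symm (Sum.elim e fun _ => b)

@[simp] theorem expVec_inl (e : Fin n → ℕ) (b : ℕ) (j : Fin n) :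
    expVec e b (Sum.inl j) = e j := rfl

@[simp] theorem expVec_inr (e : Fin n → ℕ) (b : ℕ) : expVec e b (Sum.inr ()) = b := rfl

theorem prod_X_pow_mul_X_pow (R : Type*) [CommSemiring R] (e : Fin n → ℕ) (b : ℕ) :
    (∏ j : Fin n, (X (Sum.inl j) : MvPolynomial (Fin n ⊕ Unit) R) ^ e j) * X (Sum.inr ()) ^ b =
      monomial (expVec e b) 1 := by
  rw [monomial_eq, C_1, one_mul, Finsupp.prod_fintype _ _ fun _ => pow_zero _,
    Fintype.prod_sum_type, Fintype.prod_unique (fun u : Unit => _)]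
  rfl

theorem degw_add (σ τ : (Fin n ⊕ Unit) →₀ ℕ) : degw n (σ + τ) = degw n σ + degw n τ := by
  simp only [degw, Finsupp.add_apply, Finset.sum_add_distrib]
  ring

@[simp] theorem degw_single_inl (j : Fin n) (a : ℕ) : degw n (single (Sum.inl j) a) = a := by
  simp [degw, Finsupp.single_apply]

@[simp] theorem degw_single_inr (b : ℕ) : degw n (single (Sum.inr ()) b) = 2 * b := by
  simp [degw]

theorem apply_le_degw (σ : (Fin n ⊕ Unit) →₀ ℕ) (v : Fin n ⊕ Unit) : σ v ≤ degw n σ := by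
  rcases v with j | ⟨⟨⟩⟩
  · exact (Finset.single_le_sum (fun i _ => Nat.zero_le (σ (Sum.inl i)))
      (Finset.mem_univ j)).trans (Nat.le_add_right _ _)
  · exact le_add_left (Nat.le_mul_of_pos_left (σ (Sum.inr ())) two_pos)

theorem finite_setOf_degw_eq (d : ℕ) : {σ : (Fin n ⊕ Unit) →₀ ℕ | degw n σ = d}.Finite :=
  (Set.finite_Iic (Finsupp.equivFunOnFinite.symm fun _ => d)).subset fun σ hσ v =>
    hσ ▸ apply_le_degw σ v

noncomputable def m₁Exp (n d : ℕ) : (Fin n ⊕ Unit) →₀ ℕ :=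
  expVec (fun j : Fin n => if (j : ℕ) < n - 2 then d - 1 else if (j : ℕ) = n - 2 then n else 0)
    (d - 1)

noncomputable def m₂Exp (n d : ℕ) : (Fin n ⊕ Unit) →₀ ℕ :=
  expVec (fun _ : Fin n => d - 1) (n / 2)

/-- The paper's `D(m)`. -/
def degDivisors (n d : ℕ) (m : (Fin n ⊕ Unit) →₀ ℕ) : Set ((Fin n ⊕ Unit) →₀ ℕ) :=
  {σ | degw n σ = d ∧ σ ≤ m}

/-- The paper's `A(m)`: the condition `∃ v, d ≤ σ v + m v` says that `x^σ x^m` is divisible by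
one of the generators `x_0^d, …, x_{n-1}^d, y^d` of `I`. -/
def colonExps (n d : ℕ) (m : (Fin n ⊕ Unit) →₀ ℕ) : Set ((Fin n ⊕ Unit) →₀ ℕ) :=
  {σ | degw n σ = d ∧ (∀ j : Fin n, σ ≠ single (Sum.inl j) d) ∧ ∃ v, d ≤ σ v + m v}

noncomputable def exchange (i j : Fin n) (σ : (Fin n ⊕ Unit) →₀ ℕ) : (Fin n ⊕ Unit) →₀ ℕ :=
  σ - (single (Sum.inl i) 1 + single (Sum.inl j) (n + 1)) + single (Sum.inr ()) (n / 2 + 1)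

section exchange

variable {i j : Fin n} {σ : (Fin n ⊕ Unit) →₀ ℕ}

theorem degw_exchange (hn : Even n) (h : single (Sum.inl i) 1 + single (Sum.inl j) (n + 1) ≤ σ) :
    degw n (exchange i j σ) = degw n σ := by
  conv_rhs => rw [← tsub_add_cancel_of_le h]
  simp only [exchange, degw_add, degw_single_inl, degw_single_inr]
  have := Nat.two_mul_div_two_of_even hn
  omega

@[simp] theorem exchange_inr : exchange i j σ (Sum.inr ()) = σ (Sum.inr ()) + (n / 2 + 1) := by
  simp [exchange]

theorem injOn_exchange (i j : Fin n) :
    Set.InjOn (exchange i j) {σ | single (Sum.inl i) 1 + single (Sum.inl j) (n + 1) ≤ σ} :=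
  fun _ hσ _ hτ h => tsub_inj_left hσ hτ (add_right_cancel h)

end exchange

variable {d : ℕ} {σ : (Fin n ⊕ Unit) →₀ ℕ}

theorem exchange_notMem_degDivisors (i j : Fin n) :
    exchange i j σ ∉ degDivisors n d (m₂Exp n d) := fun h => by
  have := h.2 (Sum.inr ())
  simp only [exchange_inr, m₂Exp, expVec_inr] at this
  omega

theorem exchange_mem_colonExps (hn : Even n) (hd : 0 < d) {i j : Fin n}
    (h : single (Sum.inl i) 1 + single (Sum.inl j) (n + 1) ≤ σ) (hσ : degw n σ = d) :
    exchange i j σ ∈ colonExps n d (m₁Exp n d) := by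
  refine ⟨(degw_exchange hn h).trans hσ, fun k hk => ?_, Sum.inr (), ?_⟩
  · simpa using DFunLike.congr_fun hk (Sum.inr ())
  · simp only [exchange_inr, m₁Exp, expVec_inr]
    omega

theorem mem_colonExps (hd : 0 < d) {m : (Fin n ⊕ Unit) →₀ ℕ}
    (hσ : σ ∈ degDivisors n d (m₂Exp n d)) (h : ∃ v, d ≤ σ v + m v) :
    σ ∈ colonExps n d m := by
  refine ⟨hσ.1, fun k hk => ?_, h⟩
  have := hσ.2 (Sum.inl k)
  simp [hk, m₂Exp] at this
  omega

theorem le_of_forall_add_m₁Exp_lt (hn : 2 ≤ n) (hσ : σ ∈ degDivisors n d (m₂Exp n d))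
    (h : ∀ v, σ v + m₁Exp n d v < d) :
    single (Sum.inl ⟨n - 2, by omega⟩) 1 + single (Sum.inl ⟨n - 1, by omega⟩) (n + 1) ≤ σ := by
  set i₂ : Fin n := ⟨n - 2, by omega⟩
  set i₁ : Fin n := ⟨n - 1, by omega⟩
  have hy : σ (Sum.inr ()) = 0 := by
    have := h (Sum.inr ())
    simp only [m₁Exp, expVec_inr] at this
    omega
  have hlow (j : Fin n) (hj : (j : ℕ) < n - 2) : σ (Sum.inl j) = 0 := by
    have := h (Sum.inl j)
    simp only [m₁Exp, expVec_inl, if_pos hj] at this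
    omega
  have h₂ : σ (Sum.inl i₂) + n < d := by simpa [m₁Exp, i₂] using h (Sum.inl i₂)
  have h₁ : σ (Sum.inl i₁) ≤ d - 1 := by simpa [m₂Exp] using hσ.2 (Sum.inl i₁)
  have hne : i₂ ≠ i₁ := by simp [i₂, i₁, Fin.ext_iff]; omega
  have hsum : σ (Sum.inl i₂) + σ (Sum.inl i₁) = d := by
    have hdeg := hσ.1
    rwa [degw, hy, Fintype.sum_eq_add i₂ i₁ hne
      fun j hj => hlow j (by simp [i₂, i₁, Fin.ext_iff] at hj; omega)] at hdeg
  rw [Finsupp.le_def]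
  rintro (j | ⟨⟨⟩⟩)
  · simp only [Finsupp.add_apply, Finsupp.single_apply, Sum.inl.injEq]
    split_ifs with hj₂ hj₁ hj₁
    · exact absurd (hj₂.trans hj₁.symm) hne
    · subst hj₂; omega
    · subst hj₁; omega
    · exact Nat.zero_le _
  · simp

theorem ncard_degDivisors_le_ncard_colonExps (hn : 2 ≤ n) (heven : Even n) (hd : 0 < d) :
    (degDivisors n d (m₂Exp n d)).ncard ≤ (colonExps n d (m₁Exp n d)).ncard := by
  classical
  set bad := {σ : (Fin n ⊕ Unit) →₀ ℕ | ∀ v, σ v + m₁Exp n d v < d}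
  have hexch {σ} (hσ : σ ∈ degDivisors n d (m₂Exp n d)) (hb : σ ∈ bad) :=
    le_of_forall_add_m₁Exp_lt hn hσ hb
  refine Set.ncard_le_ncard_of_injOn (bad.piecewise (exchange _ _) id) (fun σ hσ => ?_)
    (Set.injOn_piecewise_id ((injOn_exchange _ _).mono fun σ hσ => hexch hσ.1 hσ.2)
      fun σ _ => exchange_notMem_degDivisors _ _)
    ((finite_setOf_degw_eq d).subset fun σ hσ => hσ.1)
  by_cases hb : σ ∈ bad
  · rw [Set.piecewise_eq_of_mem _ _ _ hb]
    exact exchange_mem_colonExps heven hd (hexch hσ hb) hσ.1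
  · rw [Set.piecewise_eq_of_notMem _ _ _ hb]
    simp only [bad, Set.mem_ofPred_eq, not_forall, not_lt] at hb
    exact mem_colonExps hd hσ hb

end

/-- Let `n ≥ 2` be even. Then there is `D` such that for every odd `d ≥ D`,
with `I = ⟨x_0^d, …, x_{n-1}^d, y^d⟩`,
`m₁ = x_0^{d-1} ⋯ x_{n-3}^{d-1} x_{n-2}^{n} y^{d-1}` (so `m₁ = x_0^2 y^{d-1}` when `n = 2`)
and `m₂ = x_0^{d-1} ⋯ x_{n-1}^{d-1} y^{n/2}` in `R = k[x_0, …, x_{n-1}, y]`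
(with `deg x_j = 1`, `deg y = 2`): the number of monomials of weighted degree `d` dividing
`m₂` is at most the number of monomials `u` of weighted degree `d` which are none of
`x_0^d, …, x_{n-1}^d` and satisfy `u * m₁ ∈ I`. -/
theorem stmt_15 (k : Type*) [Field k] (n : ℕ) (hn : 2 ≤ n) (hneven : Even n) :
    ∃ D : ℕ, ∀ d : ℕ, D ≤ d → Odd d →
      Set.ncard {σ : (Fin n ⊕ Unit) →₀ ℕ | degw n σ = d ∧
          monomial σ (1 : k) ∣
            (∏ j : Fin n, X (Sum.inl j) ^ (d - 1)) * X (Sum.inr ()) ^ (n / 2)} ≤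
      Set.ncard {σ : (Fin n ⊕ Unit) →₀ ℕ | degw n σ = d ∧
          (∀ j : Fin n,
            monomial σ (1 : k) ≠ (X (Sum.inl j) : MvPolynomial (Fin n ⊕ Unit) k) ^ d) ∧
          monomial σ (1 : k) *
              ((∏ j : Fin n, X (Sum.inl j) ^
                  (if (j : ℕ) < n - 2 then d - 1 else if (j : ℕ) = n - 2 then n else 0)) *
                X (Sum.inr ()) ^ (d - 1)) ∈
            Ideal.span ({(X (Sum.inr ()) : MvPolynomial (Fin n ⊕ Unit) k) ^ d} ∪
              Set.range fun j : Fin n =>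
                (X (Sum.inl j) : MvPolynomial (Fin n ⊕ Unit) k) ^ d)} := by
  refine ⟨1, fun d hd _ => ?_⟩
  simp only [prod_X_pow_mul_X_pow, monomial_one_dvd_monomial_one, monomial_mul, one_mul, ne_eq,
    monomial_one_eq_X_pow_iff]
  refine (ncard_degDivisors_le_ncard_colonExps hn hneven hd).trans
    (Set.ncard_le_ncard (fun σ ⟨hdeg, hpow, v, hv⟩ => ⟨hdeg, hpow, ?_⟩)
      ((finite_setOf_degw_eq d).subset fun σ hσ => hσ.1))
  refine monomial_mem_of_X_pow_mem (Ideal.subset_span ?_) hv 1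
  rcases v with j | ⟨⟨⟩⟩
  · exact Or.inr ⟨j, rfl⟩
  · exact Or.inl rfl
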